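/- Suppose (G_n, c_n), γ_n > 0 and δ_n → 0 satisfy Assumption (EO), with G_n simple and c_n connected. Then for every pair of vertices u, v ∈ V(G_n): R_eff(u ↔ v) ≥ (1−δ_n)·1[u∈W_n]/C_u + (1−δ_n)·1[v∈W_n]/C_v, and moreover R_eff(u ↔ v) ≥ 1/(2C_u) + 1/(2C_v), where W_n := {w ∈ V(G_n) : C_w ≥ γ_n}. -/

import Mathlib

open MeasureTheory Filter Finset

noncomputable section

set_option linter.unusedSectionVars false

namespace WSTPaper

variable {V : Type} [Fintype V] [DecidableEq V]

/-- The conductance `C_v = Σ_{u ~ v} c(u,v)` of a vertex in the electric network `(G, c)`. -/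
def vertCond (G : SimpleGraph V) [DecidableRel G.Adj] (c : Sym2 V → ℝ) (v : V) : ℝ :=
  ∑ u ∈ G.neighborFinset v, c s(u, v)

/-- The Dirichlet energy of a function `h` on the electric network `(G, c)`. -/
def energy (G : SimpleGraph V) [DecidableRel G.Adj] (c : Sym2 V → ℝ) (h : V → ℝ) : ℝ :=
  (1 / 2) * ∑ v : V, ∑ u ∈ G.neighborFinset v, c s(u, v) * (h u - h v) ^ 2

/-- The effective conductance `C_eff(a ↔ Z)`.  By Dirichlet's principle it equals
`C_a · P_a(τ_Z < τ_a⁺)`, the random-walk characterization of effective conductance. -/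
def effCond (G : SimpleGraph V) [DecidableRel G.Adj] (c : Sym2 V → ℝ) (a : V) (Z : Set V) : ℝ :=
  ⨅ h : {h : V → ℝ // h a = 1 ∧ ∀ z ∈ Z, h z = 0}, energy G c (h : V → ℝ)

/-- The effective resistance `R_eff(a ↔ Z) = 1 / (C_a · P_a(τ_Z < τ_a⁺))`. -/
def effResSet (G : SimpleGraph V) [DecidableRel G.Adj] (c : Sym2 V → ℝ) (a : V) (Z : Set V) :
    ℝ := (effCond G c a Z)⁻¹

/-- The effective resistance `R_eff(a ↔ b) = 1 / (C_a · P_a(τ_b < τ_a⁺))` between two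
vertices of the electric network `(G, c)`. -/
def effRes (G : SimpleGraph V) [DecidableRel G.Adj] (c : Sym2 V → ℝ) (a b : V) : ℝ :=
  effResSet G c a {b}

section Aux

variable (G : SimpleGraph V) [DecidableRel G.Adj] (c : Sym2 V → ℝ)

lemma energy_nonneg (hc : ∀ e ∈ G.edgeSet, 0 < c e) (h : V → ℝ) : 0 ≤ energy G c h := by
  apply mul_nonneg (by norm_num)
  refine Finset.sum_nonneg fun v _ => Finset.sum_nonneg fun w hw => ?_
  have hadj : G.Adj w v := ((G.mem_neighborFinset v w).1 hw).symm
  exact mul_nonneg (le_of_lt (hc _ (by rwa [SimpleGraph.mem_edgeSet]))) (sq_nonneg _)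

lemma effCond_le (hc : ∀ e ∈ G.edgeSet, 0 < c e) {u v : V} (h : V → ℝ)
    (hu : h u = 1) (hv : h v = 0) : effCond G c u {v} ≤ energy G c h :=
  ciInf_le ⟨0, by rintro x ⟨g, rfl⟩; exact energy_nonneg G c hc _⟩
    (⟨h, hu, by intro z hz; rw [Set.mem_singleton_iff] at hz; rwa [hz]⟩ :
      {h : V → ℝ // h u = 1 ∧ ∀ z ∈ ({v} : Set V), h z = 0})

lemma energy_test {u v : V} (hne : u ≠ v) (t : ℝ) :
    energy G c (fun w => if w = u then 1 else if w = v then (0:ℝ) else t)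
      = (1 - t) ^ 2 * (vertCond G c u - (if G.Adj u v then c s(u, v) else 0))
        + t ^ 2 * (vertCond G c v - (if G.Adj u v then c s(u, v) else 0))
        + (if G.Adj u v then c s(u, v) else 0) := by
  set h : V → ℝ := fun w => if w = u then 1 else if w = v then 0 else t with hh
  set q : ℝ := if G.Adj u v then c s(u, v) else 0 with hq
  have hu1 : h u = 1 := by simp [hh]
  have hv0 : h v = 0 := by simp [hh, hne.symm]
  have Fu : ∑ w ∈ G.neighborFinset u, c s(w, u) * (h w - h u) ^ 2
      = (1 - t) ^ 2 * vertCond G c u + (1 - (1 - t) ^ 2) * q := by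
    have step : ∀ w ∈ G.neighborFinset u, c s(w, u) * (h w - h u) ^ 2
        = (1 - t) ^ 2 * c s(w, u) + (if w = v then (1 - (1 - t) ^ 2) * c s(u, v) else 0) := by
      intro w hw
      have hwu : w ≠ u := fun e => G.irrefl (e ▸ (G.mem_neighborFinset u w).1 hw)
      rw [hu1]
      by_cases hwv : w = v
      · rw [if_pos hwv]
        have hhw : h w = 0 := by simp [hh, hwu, hwv, hne.symm]
        rw [hhw, hwv, Sym2.eq_swap]
        ring
      · rw [if_neg hwv]
        have hhw : h w = t := by simp [hh, hwu, hwv]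
        rw [hhw]
        ring
    rw [Finset.sum_congr rfl step, Finset.sum_add_distrib, ← Finset.mul_sum,
      Finset.sum_ite_eq']
    by_cases hadj : G.Adj u v
    · simp only [hq, if_pos hadj, if_pos ((G.mem_neighborFinset u v).2 hadj), vertCond]
    · simp only [hq, if_neg hadj,
        if_neg (fun hm : v ∈ G.neighborFinset u => hadj ((G.mem_neighborFinset u v).1 hm)),
        vertCond]
      ring
  have Fv : ∑ w ∈ G.neighborFinset v, c s(w, v) * (h w - h v) ^ 2
      = t ^ 2 * vertCond G c v + (1 - t ^ 2) * q := by
    have step : ∀ w ∈ G.neighborFinset v, c s(w, v) * (h w - h v) ^ 2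
        = t ^ 2 * c s(w, v) + (if w = u then (1 - t ^ 2) * c s(u, v) else 0) := by
      intro w hw
      have hwv : w ≠ v := fun e => G.irrefl (e ▸ (G.mem_neighborFinset v w).1 hw)
      rw [hv0]
      by_cases hwu : w = u
      · rw [if_pos hwu]
        have hhw : h w = 1 := by simp [hh, hwu]
        rw [hhw, hwu]
        ring
      · rw [if_neg hwu]
        have hhw : h w = t := by simp [hh, hwu, hwv]
        rw [hhw]
        ring
    rw [Finset.sum_congr rfl step, Finset.sum_add_distrib, ← Finset.mul_sum,
      Finset.sum_ite_eq']
    by_cases hadj : G.Adj u v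
    · simp only [hq, if_pos hadj, if_pos ((G.mem_neighborFinset v u).2 hadj.symm), vertCond]
    · simp only [hq, if_neg hadj,
        if_neg (fun hm : u ∈ G.neighborFinset v => hadj ((G.mem_neighborFinset v u).1 hm).symm),
        vertCond]
      ring
  have Fother : ∑ x ∈ Finset.univ \ ({u, v} : Finset V),
      (∑ w ∈ G.neighborFinset x, c s(w, x) * (h w - h x) ^ 2)
      = (1 - t) ^ 2 * (vertCond G c u - q) + t ^ 2 * (vertCond G c v - q) := by
    have step : ∀ x ∈ Finset.univ \ ({u, v} : Finset V),
        (∑ w ∈ G.neighborFinset x, c s(w, x) * (h w - h x) ^ 2)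
        = (if x ∈ G.neighborFinset u then (1 - t) ^ 2 * c s(x, u) else 0)
          + (if x ∈ G.neighborFinset v then t ^ 2 * c s(x, v) else 0) := by
      intro x hx
      simp only [Finset.mem_sdiff, Finset.mem_insert, Finset.mem_singleton] at hx
      have hxu : x ≠ u := fun e => hx.2 (Or.inl e)
      have hxv : x ≠ v := fun e => hx.2 (Or.inr e)
      have hxt : h x = t := by simp [hh, hxu, hxv]
      have inner : ∀ w ∈ G.neighborFinset x, c s(w, x) * (h w - h x) ^ 2
          = (if w = u then (1 - t) ^ 2 * c s(w, x) else 0)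
            + (if w = v then t ^ 2 * c s(w, x) else 0) := by
        intro w hw
        rw [hxt]
        by_cases hwu : w = u
        · rw [if_pos hwu, if_neg (hwu ▸ hne : w ≠ v)]
          have hhw : h w = 1 := by simp [hh, hwu]
          rw [hhw]
          ring
        · rw [if_neg hwu]
          by_cases hwv : w = v
          · rw [if_pos hwv]
            have hhw : h w = 0 := by simp [hh, hwu, hwv, hne.symm]
            rw [hhw]
            ring
          · rw [if_neg hwv]
            have hhw : h w = t := by simp [hh, hwu, hwv]
            rw [hhw]
            ring
      rw [Finset.sum_congr rfl inner, Finset.sum_add_distrib,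
        Finset.sum_ite_eq' _ u (fun w => (1 - t) ^ 2 * c s(w, x)),
        Finset.sum_ite_eq' _ v (fun w => t ^ 2 * c s(w, x))]
      congr 1
      · by_cases hadj' : G.Adj u x
        · rw [if_pos ((G.mem_neighborFinset x u).2 hadj'.symm),
            if_pos ((G.mem_neighborFinset u x).2 hadj'), Sym2.eq_swap]
        · rw [if_neg (fun hm : u ∈ G.neighborFinset x =>
              hadj' ((G.mem_neighborFinset x u).1 hm).symm),
            if_neg (fun hm : x ∈ G.neighborFinset u =>
              hadj' ((G.mem_neighborFinset u x).1 hm))]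
      · by_cases hadj' : G.Adj v x
        · rw [if_pos ((G.mem_neighborFinset x v).2 hadj'.symm),
            if_pos ((G.mem_neighborFinset v x).2 hadj'), Sym2.eq_swap]
        · rw [if_neg (fun hm : v ∈ G.neighborFinset x =>
              hadj' ((G.mem_neighborFinset x v).1 hm).symm),
            if_neg (fun hm : x ∈ G.neighborFinset v =>
              hadj' ((G.mem_neighborFinset v x).1 hm))]
    rw [Finset.sum_congr rfl step, Finset.sum_add_distrib]
    have e1 : ∑ x ∈ Finset.univ \ ({u, v} : Finset V),
        (if x ∈ G.neighborFinset u then (1 - t) ^ 2 * c s(x, u) else 0)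
        = (1 - t) ^ 2 * (vertCond G c u - q) := by
      rw [Finset.sum_ite_mem]
      have hset : (Finset.univ \ ({u, v} : Finset V)) ∩ G.neighborFinset u
          = (G.neighborFinset u).erase v := by
        ext x
        simp only [Finset.mem_inter, Finset.mem_sdiff, Finset.mem_erase, Finset.mem_univ,
          Finset.mem_insert, Finset.mem_singleton, true_and, SimpleGraph.mem_neighborFinset]
        constructor
        · rintro ⟨hx, hadj⟩; exact ⟨fun e => hx (Or.inr e), hadj⟩
        · rintro ⟨hxv, hadj⟩
          exact ⟨fun hor => hor.elim (fun e => G.irrefl (e ▸ hadj)) hxv, hadj⟩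
      rw [hset]
      by_cases hadj : G.Adj u v
      · rw [Finset.sum_erase_eq_sub ((G.mem_neighborFinset u v).2 hadj), ← Finset.mul_sum]
        simp only [hq, if_pos hadj, vertCond]
        rw [Sym2.eq_swap]
        ring
      · rw [Finset.erase_eq_of_notMem (fun hm => hadj ((G.mem_neighborFinset u v).1 hm)),
          ← Finset.mul_sum]
        simp only [hq, if_neg hadj, vertCond]
        ring
    have e2 : ∑ x ∈ Finset.univ \ ({u, v} : Finset V),
        (if x ∈ G.neighborFinset v then t ^ 2 * c s(x, v) else 0)
        = t ^ 2 * (vertCond G c v - q) := by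
      rw [Finset.sum_ite_mem]
      have hset : (Finset.univ \ ({u, v} : Finset V)) ∩ G.neighborFinset v
          = (G.neighborFinset v).erase u := by
        ext x
        simp only [Finset.mem_inter, Finset.mem_sdiff, Finset.mem_erase, Finset.mem_univ,
          Finset.mem_insert, Finset.mem_singleton, true_and, SimpleGraph.mem_neighborFinset]
        constructor
        · rintro ⟨hx, hadj⟩; exact ⟨fun e => hx (Or.inl e), hadj⟩
        · rintro ⟨hxu, hadj⟩
          exact ⟨fun hor => hor.elim hxu (fun e => G.irrefl (e ▸ hadj)), hadj⟩
      rw [hset]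
      by_cases hadj : G.Adj u v
      · rw [Finset.sum_erase_eq_sub ((G.mem_neighborFinset v u).2 hadj.symm), ← Finset.mul_sum]
        simp only [hq, if_pos hadj, vertCond]
        rw [Sym2.eq_swap]
        ring
      · rw [Finset.erase_eq_of_notMem
          (fun hm => hadj ((G.mem_neighborFinset v u).1 hm).symm),
          ← Finset.mul_sum]
        simp only [hq, if_neg hadj, vertCond]
        ring
    rw [e1, e2]
  have split : (Finset.univ : Finset V) = ({u, v} : Finset V) ∪ (Finset.univ \ {u, v}) :=
    (Finset.union_sdiff_of_subset (Finset.subset_univ _)).symm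
  rw [energy, split, Finset.sum_union Finset.disjoint_sdiff, Finset.sum_pair hne, Fu, Fv, Fother]
  ring

lemma walk_sum_darts {G : SimpleGraph V} (h : V → ℝ) {x y : V} (p : G.Walk x y) :
    (p.darts.map fun d => h d.toProd.1 - h d.toProd.2).sum = h x - h y := by
  induction p with
  | nil => simp
  | cons hadj p ih =>
    rw [SimpleGraph.Walk.darts_cons, List.map_cons, List.sum_cons, ih]
    ring

lemma single_edge_le_energy (G : SimpleGraph V) [DecidableRel G.Adj] (c : Sym2 V → ℝ)
    (hc : ∀ e ∈ G.edgeSet, 0 < c e) (h : V → ℝ) {a b : V} (hab : G.Adj a b) :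
    c s(a, b) * (h a - h b) ^ 2 ≤ energy G c h := by
  have hterm : ∀ x, ∀ w ∈ G.neighborFinset x, 0 ≤ c s(w, x) * (h w - h x) ^ 2 := by
    intro x w hw
    have hadj : G.Adj w x := ((G.mem_neighborFinset x w).1 hw).symm
    exact mul_nonneg (le_of_lt (hc _ (by rwa [SimpleGraph.mem_edgeSet]))) (sq_nonneg _)
  have h1 : c s(a, b) * (h a - h b) ^ 2
      ≤ ∑ w ∈ G.neighborFinset b, c s(w, b) * (h w - h b) ^ 2 :=
    Finset.single_le_sum (hterm b) ((G.mem_neighborFinset b a).2 hab.symm)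
  have h2 : c s(a, b) * (h a - h b) ^ 2
      ≤ ∑ w ∈ G.neighborFinset a, c s(w, a) * (h w - h a) ^ 2 := by
    have := Finset.single_le_sum (hterm a) ((G.mem_neighborFinset a b).2 hab)
    calc c s(a, b) * (h a - h b) ^ 2 = c s(b, a) * (h b - h a) ^ 2 := by
          rw [Sym2.eq_swap]; ring
      _ ≤ _ := this
  have h3 : (∑ x ∈ ({a, b} : Finset V), ∑ w ∈ G.neighborFinset x, c s(w, x) * (h w - h x) ^ 2)
      ≤ ∑ x : V, ∑ w ∈ G.neighborFinset x, c s(w, x) * (h w - h x) ^ 2 :=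
    Finset.sum_le_sum_of_subset_of_nonneg (Finset.subset_univ _)
      (fun x _ _ => Finset.sum_nonneg (hterm x))
  rw [Finset.sum_pair (G.ne_of_adj hab)] at h3
  rw [energy]
  linarith

lemma effCond_pos (G : SimpleGraph V) [DecidableRel G.Adj] (c : Sym2 V → ℝ)
    (hconn : G.Connected) (hc : ∀ e ∈ G.edgeSet, 0 < c e) {u v : V} (hne : u ≠ v) :
    0 < effCond G c u {v} := by
  obtain ⟨p⟩ := hconn.preconnected u v
  have hL : 0 < p.length := by
    rcases Nat.eq_zero_or_pos p.length with h0 | h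
    · exact absurd (SimpleGraph.Walk.eq_of_length_eq_zero h0) hne
    · exact h
  set L : ℝ := (p.length : ℝ) with hLdef
  have hLpos : 0 < L := by rw [hLdef]; exact_mod_cast hL
  -- a positive lower bound on edge conductances along p
  have hene : G.edgeFinset.Nonempty := by
    rcases p with _ | @⟨_, w, _, hadj, p'⟩
    · exact absurd rfl hne
    · exact ⟨s(u, w), SimpleGraph.mem_edgeFinset.2 (by rwa [SimpleGraph.mem_edgeSet])⟩
  have himg : (G.edgeFinset.image c).Nonempty := hene.image c
  set m : ℝ := (G.edgeFinset.image c).min' himg with hmdef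
  have hmpos : 0 < m := by
    obtain ⟨e, he, hce⟩ := Finset.mem_image.1 ((G.edgeFinset.image c).min'_mem himg)
    rw [hmdef, ← hce]
    exact hc e (SimpleGraph.mem_edgeFinset.1 he)
  have hr : 0 < m / L ^ 2 := by positivity
  haveI : Nonempty {h : V → ℝ // h u = 1 ∧ ∀ z ∈ ({v} : Set V), h z = 0} :=
    ⟨⟨fun w => if w = u then 1 else 0, by simp, by
      intro z hz
      rw [Set.mem_singleton_iff] at hz
      rw [hz]
      simp [hne.symm]⟩⟩
  refine lt_of_lt_of_le hr (le_ciInf ?_)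
  rintro ⟨h, hu1, hv0⟩
  have hv0' : h v = 0 := hv0 v rfl
  set l : List ℝ := p.darts.map (fun d => h d.toProd.1 - h d.toProd.2) with hldef
  have hlsum : l.sum = 1 := by rw [hldef, walk_sum_darts, hu1, hv0']; ring
  have hdartslen : p.darts.length = p.length := p.length_darts
  have hlne : l ≠ [] := by
    intro hnil
    have h0 : l.length = 0 := by rw [hnil]; rfl
    rw [hldef, List.length_map, hdartslen] at h0
    omega
  obtain ⟨M, hM⟩ := WithBot.ne_bot_iff_exists.1 (List.maximum_ne_bot_of_ne_nil hlne)
  have hMmem : M ∈ l := List.maximum_mem hM.symm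
  have hsumle : l.sum ≤ l.length • M :=
    List.sum_le_card_nsmul l M (fun x hx => List.le_maximum_of_mem hx hM.symm)
  have hlen : (l.length : ℝ) = L := by
    rw [hldef, List.length_map, hdartslen, hLdef]
  have hM1 : 1 / L ≤ M := by
    rw [hlsum, nsmul_eq_mul] at hsumle
    rw [div_le_iff₀ hLpos]
    calc (1 : ℝ) ≤ (l.length : ℝ) * M := hsumle
      _ = M * L := by rw [hlen]; ring
  have hMpos : 0 < M := lt_of_lt_of_le (by positivity) hM1
  obtain ⟨d, hdmem, hdval⟩ := List.mem_map.1 hMmem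
  have hadj : G.Adj d.toProd.1 d.toProd.2 := d.adj
  have hedgeS : s(d.toProd.1, d.toProd.2) ∈ G.edgeSet := by
    rw [SimpleGraph.mem_edgeSet]; exact hadj
  have hedge : s(d.toProd.1, d.toProd.2) ∈ G.edgeFinset := SimpleGraph.mem_edgeFinset.2 hedgeS
  have hcge : m ≤ c s(d.toProd.1, d.toProd.2) :=
    Finset.min'_le _ _ (Finset.mem_image_of_mem c hedge)
  have hsq : (1 / L) ^ 2 ≤ (h d.toProd.1 - h d.toProd.2) ^ 2 := by
    rw [hdval]
    exact pow_le_pow_left₀ (by positivity) hM1 2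
  have hkey : m / L ^ 2 ≤ c s(d.toProd.1, d.toProd.2) * (h d.toProd.1 - h d.toProd.2) ^ 2 := by
    have : m / L ^ 2 = m * (1 / L) ^ 2 := by field_simp
    rw [this]
    exact mul_le_mul hcge hsq (by positivity) (le_of_lt (hc _ hedgeS))
  exact le_trans hkey (single_edge_le_energy G c hc h hadj)

end Aux

/-- Under Assumption (EO) (with `Gₙ` simple and `cₙ` connected), for all
large `n` and every pair of distinct vertices `u, v`:
`R_eff(u ↔ v) ≥ (1-δₙ)·1[u ∈ Wₙ]/C_u + (1-δₙ)·1[v ∈ Wₙ]/C_v`, and moreover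
`R_eff(u ↔ v) ≥ 1/(2C_u) + 1/(2C_v)`, where `Wₙ = {w : C_w ≥ γₙ}`. -/
theorem effRes_lower_bound
    (V : ℕ → Type) [∀ n, Fintype (V n)] [∀ n, DecidableEq (V n)]
    (G : ∀ n, SimpleGraph (V n)) [∀ n, DecidableRel (G n).Adj]
    (c : ∀ n, Sym2 (V n) → ℝ) (γ : ℕ → ℝ) (δ : ℕ → ℝ)
    (hconn : ∀ n, (G n).Connected)
    (hpos : ∀ n, ∀ e ∈ (G n).edgeSet, 0 < c n e)
    (hγ : ∀ n, 0 < γ n)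
    (hδ : Tendsto δ atTop (nhds 0))
    -- Assumption (EO)(i): |Wₙ| ≥ (1-δₙ)|V(Gₙ)| for all large n
    (hW : ∀ᶠ n in atTop,
      (((Finset.univ.filter fun v : V n => γ n ≤ vertCond (G n) (c n) v).card : ℝ))
        ≥ (1 - δ n) * (Fintype.card (V n) : ℝ))
    -- Assumption (EO)(ii): cₙ(e) ≤ δₙ·γₙ for all edges, for all large n
    (hc : ∀ᶠ n in atTop, ∀ e ∈ (G n).edgeSet, c n e ≤ δ n * γ n) :
    ∀ᶠ n in atTop, ∀ u v : V n, u ≠ v →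
      (effRes (G n) (c n) u v ≥
        (if γ n ≤ vertCond (G n) (c n) u then (1 - δ n) / vertCond (G n) (c n) u else 0) +
        (if γ n ≤ vertCond (G n) (c n) v then (1 - δ n) / vertCond (G n) (c n) v else 0)) ∧
      effRes (G n) (c n) u v ≥
        1 / (2 * vertCond (G n) (c n) u) + 1 / (2 * vertCond (G n) (c n) v) := by
  have hδsmall : ∀ᶠ n in atTop, δ n < 1 / 2 := hδ.eventually_lt_const (by norm_num)
  filter_upwards [hc, hδsmall] with n hcn hδn
  intro u v huv
  set a := vertCond (G n) (c n) u with ha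
  set b := vertCond (G n) (c n) v with hb
  have neigh : ∀ x y : V n, x ≠ y → ∃ w, (G n).Adj x w := by
    intro x y hxy
    obtain ⟨p⟩ := (hconn n).preconnected x y
    cases p with
    | nil => exact absurd rfl hxy
    | cons h _ => exact ⟨_, h⟩
  have vpos : ∀ x y : V n, x ≠ y → 0 < vertCond (G n) (c n) x := by
    intro x y hxy
    obtain ⟨w, hw⟩ := neigh x y hxy
    refine Finset.sum_pos (fun i hi => hpos n _ ?_) ⟨w, ((G n).mem_neighborFinset x w).2 hw⟩
    rw [SimpleGraph.mem_edgeSet]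
    exact (((G n).mem_neighborFinset x i).1 hi).symm
  have hapos : 0 < a := vpos u v huv
  have hbpos : 0 < b := vpos v u huv.symm
  have hδpos : 0 < δ n := by
    obtain ⟨w, hw⟩ := neigh u v huv
    have he : s(u, w) ∈ (G n).edgeSet := by rw [SimpleGraph.mem_edgeSet]; exact hw
    have h1 : 0 < c n s(u, w) := hpos n _ he
    have h2 := hcn _ he
    nlinarith [hγ n]
  set K := effCond (G n) (c n) u {v} with hKdef
  have Kpos : 0 < K := effCond_pos (G n) (c n) (hconn n) (hpos n) huv
  obtain ⟨q, hq0, hqle, Kle⟩ : ∃ q : ℝ, 0 ≤ q ∧ q ≤ δ n * γ n ∧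
      ∀ t : ℝ, K ≤ (1 - t) ^ 2 * (a - q) + t ^ 2 * (b - q) + q := by
    refine ⟨if (G n).Adj u v then c n s(u, v) else 0, ?_, ?_, ?_⟩
    · split_ifs with hadj
      · exact le_of_lt (hpos n _ (by rwa [SimpleGraph.mem_edgeSet]))
      · exact le_refl 0
    · split_ifs with hadj
      · exact hcn _ (by rwa [SimpleGraph.mem_edgeSet])
      · exact le_of_lt (mul_pos hδpos (hγ n))
    · intro t
      have h1 := effCond_le (G n) (c n) (hpos n) (u := u) (v := v)
        (fun w => if w = u then 1 else if w = v then (0 : ℝ) else t) (by simp) (by simp [huv.symm])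
      rw [energy_test (G n) (c n) huv t] at h1
      exact h1
  have hKa : K ≤ a := by have := Kle 0; norm_num at this; linarith
  have hKb : K ≤ b := by have := Kle 1; norm_num at this; linarith
  have hRes : effRes (G n) (c n) u v = K⁻¹ := rfl
  have hIa : a⁻¹ ≤ K⁻¹ := inv_anti₀ Kpos hKa
  have hIb : b⁻¹ ≤ K⁻¹ := inv_anti₀ Kpos hKb
  constructor
  · rw [hRes, ge_iff_le]
    by_cases hu : γ n ≤ a <;> by_cases hv' : γ n ≤ b
    · rw [if_pos hu, if_pos hv']
      have hqa : q ≤ δ n * a := le_trans hqle (by nlinarith)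
      have hqb : q ≤ δ n * b := le_trans hqle (by nlinarith)
      have hA : 0 < a - q := by nlinarith
      have hB : 0 < b - q := by nlinarith
      have hs : 0 < a + b - 2 * q := by nlinarith
      have hM : 0 < (1 - δ n) * (a + b) := by nlinarith
      have hKM : K ≤ a * b / ((1 - δ n) * (a + b)) := by
        refine le_trans (Kle ((a - q) / (a + b - 2 * q))) ?_
        have hs' : a + b - 2 * q ≠ 0 := ne_of_gt hs
        have heq : (1 - (a - q) / (a + b - 2 * q)) ^ 2 * (a - q)
            + ((a - q) / (a + b - 2 * q)) ^ 2 * (b - q) + q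
            = (a * b - q ^ 2) / (a + b - 2 * q) := by
          rw [eq_div_iff hs']
          have e : (a - q) / (a + b - 2 * q) * (a + b - 2 * q) = a - q := div_mul_cancel₀ _ hs'
          generalize (a - q) / (a + b - 2 * q) = x at e ⊢
          linear_combination (x * (a + b - 2 * q) - (a - q)) * e
        rw [heq, div_le_div_iff₀ hs hM]
        nlinarith [mul_le_mul_of_nonneg_left hqa (le_of_lt (mul_pos hapos hbpos)),
          mul_le_mul_of_nonneg_left hqb (le_of_lt (mul_pos hapos hbpos)),
          mul_nonneg (mul_nonneg (by linarith : (0:ℝ) ≤ 1 - δ n)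
            (by linarith : (0:ℝ) ≤ a + b)) (sq_nonneg q)]
      have hMinv : (a * b / ((1 - δ n) * (a + b)))⁻¹ ≤ K⁻¹ := inv_anti₀ Kpos hKM
      have hMeq : (a * b / ((1 - δ n) * (a + b)))⁻¹ = (1 - δ n) / a + (1 - δ n) / b := by
        rw [inv_div]
        field_simp
        ring
      rw [hMeq] at hMinv
      linarith
    · rw [if_pos hu, if_neg hv']
      have h1 : (1 - δ n) / a ≤ 1 / a := by
        gcongr
        · linarith
      rw [one_div] at h1
      linarith
    · rw [if_neg hu, if_pos hv']
      have h1 : (1 - δ n) / b ≤ 1 / b := by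
        gcongr
        · linarith
      rw [one_div] at h1
      linarith
    · rw [if_neg hu, if_neg hv']
      have : (0:ℝ) ≤ K⁻¹ := le_of_lt (inv_pos.2 Kpos)
      linarith
  · rw [hRes, ge_iff_le]
    have h2a : 1 / (2 * a) = a⁻¹ / 2 := by rw [one_div, mul_inv]; ring
    have h2b : 1 / (2 * b) = b⁻¹ / 2 := by rw [one_div, mul_inv]; ring
    rw [h2a, h2b]
    linarith


end WSTPaper
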